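/- arXiv:1707.00643 — 2 statements merged into one kernel-verified Lean document; each statement's English description precedes it below -/
import Mathlib

section
/- Let g, d be integers with g ≥ 3 and 3 ≤ d ≤ ⌊(g+3)/2⌋. Consider the lattice Λ = ℤH ⊕ ℤF with intersection form H² = 2g−2, H·F = d, F² = 0. If a vector L = sH + tF ∈ Λ satisfies L² = −2, then d divides g, and writing g = md, L = ±(H − mF). -/
/-- The intersection form of the rank-2 lattice `ℤH ⊕ ℤF` with Gram matrix
`[[2g-2, d], [d, 0]]` in the basis `H = (1,0)`, `F = (0,1)`. -/
def ip (g d : ℤ) (u v : ℤ × ℤ) : ℤ :=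
  u.1 * v.1 * (2 * g - 2) + (u.1 * v.2 + u.2 * v.1) * d

/-- The class `H`. -/
def Hc : ℤ × ℤ := (1, 0)

/-- The class `F`. -/
def Fc : ℤ × ℤ := (0, 1)

/-! Since `(sH + tF)² = 2s(s(g-1) + td)`, a class of square `-2` has `s` a unit, and then
`s(g-1) + td = -s` forces `g = -std`. -/

lemma ip_self (g d s t : ℤ) : ip g d (s, t) (s, t) = 2 * (s * (s * (g - 1) + t * d)) := by
  simp only [ip]
  ring

lemma ip_self_eq_neg_two_cases {g d s t : ℤ} (hL : ip g d (s, t) (s, t) = -2) :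
    s = 1 ∧ g = d * -t ∨ s = -1 ∧ g = d * t := by
  have key : s * (s * (g - 1) + t * d) = -1 := by
    rw [ip_self] at hL
    omega
  rcases Int.eq_one_or_neg_one_of_mul_eq_neg_one key with rfl | rfl
  · exact Or.inl ⟨rfl, by linear_combination key⟩
  · exact Or.inr ⟨rfl, by linear_combination key⟩

theorem stmt0_general (g d s t : ℤ) (hd : 3 ≤ d)
    (hL : ip g d (s, t) (s, t) = -2) :
    d ∣ g ∧ ((s, t) = (1, -(g / d)) ∨ (s, t) = (-1, g / d)) := by
  have hd0 : d ≠ 0 := by omega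
  rcases ip_self_eq_neg_two_cases hL with ⟨rfl, rfl⟩ | ⟨rfl, rfl⟩ <;>
    rw [Int.mul_ediv_cancel_left _ hd0] <;> simp

/-- If `g ≥ 3`, `3 ≤ d ≤ ⌊(g+3)/2⌋`, and `L = sH + tF` has `L² = -2` in the
lattice `ℤH ⊕ ℤF` with `H² = 2g-2`, `H·F = d`, `F² = 0`, then `d ∣ g` and,
writing `g = md`, `L = ±(H - mF)`. -/
theorem stmt0 (g d s t : ℤ) (hg : 3 ≤ g) (hd : 3 ≤ d) (hd' : d ≤ (g + 3) / 2)
    (hL : ip g d (s, t) (s, t) = -2) :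
    d ∣ g ∧ ((s, t) = (1, -(g / d)) ∨ (s, t) = (-1, g / d)) :=
  stmt0_general g d s t hd hL
end

section
/- Let X be a K3 surface, C a very ample smooth curve of genus g on X, Z a divisor on C such that |Z| is a base point free pencil, H = O_X(C), and assume |K_C ⊗ O_C(−Z)| ≠ ∅. If L is a saturated sub-line bundle of the Lazarsfeld–Mukai bundle E_{C,Z} with L·H ≥ g−1, then L² ≥ 0, and if L² = 0 then L·H = g−1. -/
/-- Abstract model of a complex K3 surface: its Picard group with the
intersection pairing, cohomology of line bundles, and the basic geometric
predicates on line bundles used in the paper. -/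
structure K3Surface where
  /-- the Picard group of the K3 surface -/
  Pic : Type
  grp : AddCommGroup Pic
  /-- the intersection pairing on `Pic` -/
  inter : Pic → Pic → ℤ
  inter_symm : ∀ L M, inter L M = inter M L
  inter_add_left : ∀ L M N, inter (L + M) N = inter L N + inter M N
  inter_smul_left : ∀ (n : ℤ) L M, inter (n • L) M = n * inter L M
  h0 : Pic → ℕ
  h1 : Pic → ℕ
  h2 : Pic → ℕ
  /-- the complete linear system of the line bundle is base point free -/
  IsBasePointFree : Pic → Prop
  /-- the line bundle is an elliptic pencil: a base point free pencil whose
  general member is a smooth curve of genus one -/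
  IsEllipticPencil : Pic → Prop
  IsVeryAmple : Pic → Prop
  /-- the class of a smooth curve of genus one on the surface -/
  IsEllipticCurveClass : Pic → Prop
  /-- the class of a `(-2)`-curve, i.e. of a smooth rational curve `Γ` with
  `Γ² = -2` -/
  IsMinusTwoCurveClass : Pic → Prop
  /-- on a K3 surface, a nontrivial base point free line bundle `N` has
  `N² ≥ 0` (Saint-Donat) -/
  bpf_sq_nonneg : ∀ N, IsBasePointFree N → N ≠ 0 → 0 ≤ inter N N

attribute [instance] K3Surface.grp

/-- Data of a smooth curve `C ∈ |H|` of genus `g` on a K3 surface `X`,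
a base point free pencil `|Z|` on `C`, and the associated rank-2
Lazarsfeld–Mukai bundle `E_{C,Z}` (the dual of the kernel of the evaluation
map `H⁰(O_C(Z)) ⊗ O_X → O_C(Z)`), together with the standard facts about
this situation. -/
structure LMSetup (X : K3Surface) where
  /-- the genus of `C` -/
  g : ℤ
  /-- `H = O_X(C)` -/
  H : X.Pic
  interHH : X.inter H H = 2 * g - 2
  /-- the Picard group of `C` -/
  PicC : Type
  grpC : AddCommGroup PicC
  /-- restriction of line bundles from `X` to `C` -/
  restrict : X.Pic → PicC
  restrict_add : ∀ L M, restrict (L + M) = restrict L + restrict M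
  /-- degree of a line bundle on `C` -/
  degC : PicC → ℤ
  h0C : PicC → ℕ
  h1C : PicC → ℕ
  /-- the canonical bundle of `C`; by adjunction on a K3 surface `K_C = H|_C` -/
  KC : PicC
  adjunction : KC = restrict H
  /-- `O_C(Z)` -/
  OZ : PicC
  degZ : ℤ
  degZ_eq : degC OZ = degZ
  /-- `|Z|` is a pencil -/
  pencil : h0C OZ = 2
  /-- `|Z|` is base point free -/
  Z_bpf : Prop
  /-- `C` is non-hyperelliptic -/
  NonHyperelliptic : Prop
  /-- Riemann–Roch on the curve `C` -/
  rrC : ∀ D, (h0C D : ℤ) - h1C D = degC D - g + 1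
  /-- the first Chern class of `E_{C,Z}` -/
  c1 : X.Pic
  /-- the second Chern class of `E_{C,Z}` -/
  c2 : ℤ
  /-- `h⁰(E_{C,Z})` -/
  h0E : ℕ
  /-- `h0Hom L = h⁰(L^∨ ⊗ E_{C,Z}) = dim Hom(O_X(L), E_{C,Z})` -/
  h0Hom : X.Pic → ℕ
  /-- `O_X(L)` is a sub-line bundle of `E_{C,Z}` -/
  SubLine : X.Pic → Prop
  /-- `O_X(L)` is a saturated sub-line bundle of `E_{C,Z}`: the quotient
  `E_{C,Z}/L` is torsion free -/
  Saturated : X.Pic → Prop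
  saturated_subline : ∀ L, Saturated L → SubLine L
  subline_hom : ∀ L, SubLine L → 0 < h0Hom L
  /-- `E_{C,Z}/L ≅ O_X(H - L)` (the quotient is a line bundle, no
  0-dimensional subscheme appears) -/
  QuotIsLineBundle : X.Pic → Prop
  /-- `E_{C,Z}` is slope stable with respect to the polarization `H` -/
  HSlopeStable : Prop
  /-- rank-2 stability criterion: since `c₁(E_{C,Z}) = H`, the bundle is
  `H`-slope stable iff every sub-line bundle `L` has `L·H < H²/2 = g - 1` -/
  stable_iff : HSlopeStable ↔ ∀ L, SubLine L → X.inter L H < g - 1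
  /-- `E_{C,Z} ≅ O_X(M) ⊕ O_X(N)` -/
  IsDirectSum : X.Pic → X.Pic → Prop
  isDirectSum_subline : ∀ M N, IsDirectSum M N → SubLine M ∧ SubLine N
  isDirectSum_c1 : ∀ M N, IsDirectSum M N → M + N = c1
  /-- from the defining exact sequence
  `0 → H⁰(O_C(Z))^∨ ⊗ L^∨ → L^∨ ⊗ E_{C,Z} → L^∨ ⊗ K_C ⊗ O_C(-Z) → 0` -/
  hom_bound : ∀ L, h0Hom L ≤ 2 * X.h0 (-L) + h0C (KC - OZ + restrict (-L))
  /-- for a saturated sub-line bundle `L`, from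
  `0 → L → E_{C,Z} → (H - L) ⊗ J_{Z'} → 0` one gets
  `L·(H - L) ≤ c₂(E_{C,Z}) = deg Z` -/
  saturated_c2 : ∀ L, Saturated L → X.inter L (H - L) ≤ degZ
  /-- when `|K_C ⊗ O_C(-Z)| ≠ ∅`, the bundle `E_{C,Z}` is globally generated
  off a finite set, so for a saturated `L` the reflexive hull
  `(E_{C,Z}/L)^∨∨ ≅ O_X(H - L)` is a nontrivial base point free line bundle -/
  saturated_bpf : ∀ L, Saturated L → 0 < h0C (KC - OZ) →
      X.IsBasePointFree (H - L) ∧ H - L ≠ 0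

attribute [instance] LMSetup.grpC

/-- A K3 surface `X` with `Pic(X) = ℤH ⊕ ℤF`, where `H` is base point free
with `H² = 2g - 2`, `F` is an elliptic pencil, and `H·F = d`. -/
structure TwoLattice (X : K3Surface) (g d : ℤ) where
  H : X.Pic
  F : X.Pic
  interHH : X.inter H H = 2 * g - 2
  interHF : X.inter H F = d
  interFF : X.inter F F = 0
  H_bpf : X.IsBasePointFree H
  F_pencil : X.IsEllipticPencil F
  /-- `H` and `F` generate `Pic(X)` -/
  gen : ∀ D : X.Pic, ∃ s t : ℤ, D = s • H + t • F
  /-- `H` and `F` are independent -/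
  free : ∀ s t : ℤ, s • H + t • F = 0 → s = 0 ∧ t = 0

lemma K3Surface.inter_add_right (X : K3Surface) (L M N : X.Pic) :
    X.inter L (M + N) = X.inter L M + X.inter L N := by
  rw [X.inter_symm, X.inter_add_left, X.inter_symm M, X.inter_symm N]

lemma K3Surface.inter_sub_sub (X : K3Surface) (H L : X.Pic) :
    X.inter (H - L) (H - L) =
      X.inter H H - 2 * X.inter L H + X.inter L L := by
  have hneg : ∀ A B : X.Pic, X.inter (-A) B = -X.inter A B := by
    intro A B
    have := X.inter_smul_left (-1) A B
    simpa using this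
  have hnegr : ∀ A B : X.Pic, X.inter A (-B) = -X.inter A B := by
    intro A B; rw [X.inter_symm, hneg, X.inter_symm]
  rw [sub_eq_add_neg, X.inter_add_left, X.inter_add_right, X.inter_add_right,
    hneg, hnegr, hnegr, hneg, X.inter_symm H L]
  ring

/-- Proposition 2.1 (i): if `C` is very ample, `|Z|` is a base point free
pencil with `|K_C ⊗ O_C(-Z)| ≠ ∅`, and `L` is a saturated sub-line bundle of
`E_{C,Z}` with `L·H ≥ g - 1`, then `L² ≥ 0`, and if `L² = 0` then
`L·H = g - 1`. -/
theorem stmt6 (X : K3Surface) (S : LMSetup X) (hC : X.IsVeryAmple S.H)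
    (hbpf : S.Z_bpf) (hKZ : 0 < S.h0C (S.KC - S.OZ))
    (L : X.Pic) (hsat : S.Saturated L) (hLH : S.g - 1 ≤ X.inter L S.H) :
    0 ≤ X.inter L L ∧ (X.inter L L = 0 → X.inter L S.H = S.g - 1) := by
  obtain ⟨hb, hne⟩ := S.saturated_bpf L hsat hKZ
  have hsq := X.bpf_sq_nonneg _ hb hne
  rw [X.inter_sub_sub, S.interHH] at hsq
  constructor
  · linarith
  · intro h0; linarith
end
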